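/- Let d ≥ 1, let δ and r be integers with 1 ≤ δ ≤ d and 0 ≤ r ≤ δ−1, and let a : ℤ^d → ℂ be square-summable with ‖u‖² = Σ_{k∈ℤ^d} |a_k|². Then T_{r,δ}(u) ≤ binom(δ,r) · ‖u‖^{2(δ+1)}. -/

import Mathlib

open scoped BigOperators
open Matrix

attribute [local instance] Classical.propDecidable

/-- The lattice hyperplane `H_{(l,s)} = { j ∈ ℤ^d : 2 l·j = -s - |l|² }`. -/
def Hplane {d : ℕ} (l : Fin d → ℤ) (s : ℤ) : Set (Fin d → ℤ) :=
  {j | 2 * (l ⬝ᵥ j) = -s - l ⬝ᵥ l}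

/-- The dimension of the affine variety spanned in `ℝ^d` by a set of lattice points:
the dimension of the direction of their affine span. -/
noncomputable def spanDim {d : ℕ} (pts : Set (Fin d → ℤ)) : ℕ :=
  Module.finrank ℝ
    ((affineSpan ℝ ((fun (j : Fin d → ℤ) (i : Fin d) => (j i : ℝ)) '' pts)).direction)

/-- `T_{r,δ}(u) = Σ_{(l,s), l≠0} Σ_{(j₁,…,j_{δ+1}) ∈ H_{(l,s)}^{δ+1} ∩ 𝒱_r^δ}
Π_σ |a_{j_σ+l}| |a_{j_σ}|`. -/
noncomputable def Tsum (d δ r : ℕ) (a : (Fin d → ℤ) → ℂ) : ℝ :=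
  ∑' p : ((Fin d → ℤ) × ℤ) × (Fin (δ + 1) → (Fin d → ℤ)),
    if p.1.1 ≠ 0 ∧ (∀ σ, p.2 σ ∈ Hplane p.1.1 p.1.2) ∧ spanDim (Set.range p.2) = r
    then ∏ σ : Fin (δ + 1), ‖a (p.2 σ + p.1.1)‖ * ‖a (p.2 σ)‖ else 0

/-! Every configuration `((l, s), j)` counted by `T_{r,δ}` lies in a hyperplane orthogonal to `l`,
and `r` of the differences `j_σ - j_0` (`σ ≠ 0`), indexed by some `S`, span all of them; there are
`binom(δ, r)` choices of `S`. For fixed `S` pick `τ ∉ S ∪ {0}` and write the summand as `A * B`,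
where `A` is the product of `|a|` over `j` with `j_τ` moved to `j_τ + l`, and `B` the product
over `j + l` with `j_τ + l` moved back to `j_τ`. By AM-GM it suffices that `Σ A²` and `Σ B²` are at
most `‖u‖^{2(δ+1)}`, i.e. that both modified tuples determine the configuration. Each of them
determines the span `V` of the differences indexed by `S`, together with `j_τ - j_0 ± l`, whose
splitting into a component in `V` and one orthogonal to `V` recovers `l`. -/

open scoped ENNReal
open Set

lemma ENNReal.two_mul_le_add_sq (a b : ℝ≥0∞) : 2 * a * b ≤ a ^ 2 + b ^ 2 := by
  rcases eq_or_ne a ⊤ with rfl | ha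
  · rcases eq_or_ne b 0 with rfl | hb <;> simp [*]
  rcases eq_or_ne b ⊤ with rfl | hb
  · rcases eq_or_ne a 0 with rfl | ha0 <;> simp [*]
  lift a to NNReal using ha
  lift b to NNReal using hb
  exact_mod_cast _root_.two_mul_le_add_sq a b

lemma ENNReal.tsum_pi_fin_prod_eq_pow {γ : Type*} (h : γ → ℝ≥0∞) (n : ℕ) :
    ∑' m : Fin n → γ, ∏ i, h (m i) = (∑' x, h x) ^ n := by
  induction n with
  | zero => simp
  | succ n ih =>
    rw [← (Fin.consEquiv fun _ ↦ γ).tsum_eq, ENNReal.tsum_prod', pow_succ',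
      ← ENNReal.tsum_mul_right]
    refine tsum_congr fun x ↦ ?_
    simp [Fin.consEquiv, Fin.prod_univ_succ, ENNReal.tsum_mul_left, ih]

lemma ENNReal.tsum_indicator_comp_le {ι κ : Type*} {s : Set ι} {I : ι → κ} (hI : InjOn I s)
    (g : κ → ℝ≥0∞) : ∑' p, s.indicator (g ∘ I) p ≤ ∑' k, g k := by
  rw [← tsum_subtype]
  exact ENNReal.tsum_comp_le_tsum_of_injective hI.injective g

lemma ENNReal.tsum_indicator_mul_le {ι κ : Type*} {s : Set ι} {A B : ι → ℝ≥0∞}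
    {g : κ → ℝ≥0∞} {I J : ι → κ} (hI : InjOn I s) (hJ : InjOn J s)
    (hA : ∀ p ∈ s, A p ^ 2 = g (I p)) (hB : ∀ p ∈ s, B p ^ 2 = g (J p)) :
    ∑' p, s.indicator (A * B) p ≤ ∑' k, g k := by
  have hpt : ∀ p,
      2 * s.indicator (A * B) p ≤ s.indicator (g ∘ I) p + s.indicator (g ∘ J) p := by
    intro p
    by_cases hp : p ∈ s
    · simpa [hp, ← hA p hp, ← hB p hp, mul_assoc] using ENNReal.two_mul_le_add_sq (A p) (B p)
    · simp [hp]
  refine (ENNReal.mul_le_mul_iff_right two_ne_zero ENNReal.ofNat_ne_top).mp ?_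
  calc 2 * ∑' p, s.indicator (A * B) p
      ≤ ∑' p, s.indicator (g ∘ I) p + ∑' p, s.indicator (g ∘ J) p := by
        rw [← ENNReal.tsum_mul_left, ← ENNReal.tsum_add]
        exact ENNReal.tsum_le_tsum hpt
    _ ≤ 2 * ∑' k, g k := by
        rw [two_mul]
        exact add_le_add (ENNReal.tsum_indicator_comp_le hI g)
          (ENNReal.tsum_indicator_comp_le hJ g)

lemma summable_and_tsum_le_of_tsum_ofReal_le {ι : Type*} {f : ι → ℝ} (hf : ∀ i, 0 ≤ f i)
    {C : ℝ} (hC : 0 ≤ C) (h : ∑' i, ENNReal.ofReal (f i) ≤ ENNReal.ofReal C) :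
    Summable f ∧ ∑' i, f i ≤ C := by
  have hfin : ∑' i, ENNReal.ofReal (f i) ≠ ⊤ := ne_top_of_le_ne_top ENNReal.ofReal_ne_top h
  have hsum : Summable f := by
    simpa [ENNReal.toReal_ofReal (hf _)] using ENNReal.summable_toReal hfin
  refine ⟨hsum, ?_⟩
  rwa [← ENNReal.ofReal_tsum_of_nonneg hf hsum, ENNReal.ofReal_le_ofReal_iff hC] at h

lemma dotProduct_eq_zero_of_mem_span {R n : Type*} [CommSemiring R] [Fintype n]
    {u x : n → R} {s : Set (n → R)} (h : ∀ y ∈ s, u ⬝ᵥ y = 0) (hx : x ∈ Submodule.span R s) :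
    u ⬝ᵥ x = 0 := by
  induction hx using Submodule.span_induction with
  | mem y hy => exact h y hy
  | zero => simp
  | add y z _ _ hy hz => rw [dotProduct_add, hy, hz, add_zero]
  | smul c y _ hy => rw [dotProduct_smul, hy, smul_zero]

lemma eq_of_add_eq_add_of_dotProduct_eq_zero {R n : Type*} [Ring R] [LinearOrder R]
    [IsStrictOrderedRing R] [Fintype n] {V : Submodule R (n → R)} {w w' u u' : n → R}
    (hw : w ∈ V) (hw' : w' ∈ V) (hu : ∀ x ∈ V, u ⬝ᵥ x = 0) (hu' : ∀ x ∈ V, u' ⬝ᵥ x = 0)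
    (h : w + u = w' + u') : u = u' := by
  have hmem : w - w' ∈ V := V.sub_mem hw hw'
  have hself : (u' - u) ⬝ᵥ (u' - u) = 0 := by
    nth_rewrite 2 [show u' - u = w - w' by rw [sub_eq_sub_iff_add_eq_add, add_comm, h, add_comm]]
    rw [sub_dotProduct, hu' _ hmem, hu _ hmem, sub_self]
  exact (sub_eq_zero.mp (dotProduct_self_eq_zero.mp hself)).symm

namespace Tsum

variable {d δ : ℕ}

abbrev Config (d δ : ℕ) := ((Fin d → ℤ) × ℤ) × (Fin (δ + 1) → Fin d → ℤ)

def OnHplane (p : Config d δ) : Prop := ∀ σ, p.2 σ ∈ Hplane p.1.1 p.1.2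

def diffVec (j : Fin (δ + 1) → Fin d → ℤ) (σ : Fin (δ + 1)) : Fin d → ℝ :=
  Int.cast ∘ j σ - Int.cast ∘ j 0

def SpannedBy (S : Finset (Fin (δ + 1))) (j : Fin (δ + 1) → Fin d → ℤ) : Prop :=
  ∀ σ, diffVec j σ ∈ Submodule.span ℝ (diffVec j '' S)

lemma spanDim_range_eq_finrank (j : Fin (δ + 1) → Fin d → ℤ) :
    spanDim (range j) = Module.finrank ℝ (Submodule.span ℝ (range (diffVec j))) := by
  rw [spanDim, direction_affineSpan, ← range_comp,
    vectorSpan_range_eq_span_range_vsub_right ℝ _ 0]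
  rfl

lemma exists_spannedBy (j : Fin (δ + 1) → Fin d → ℤ) :
    ∃ S ∈ Finset.powersetCard (spanDim (range j)) ({0}ᶜ : Finset (Fin (δ + 1))),
      SpannedBy S j := by
  obtain ⟨κ, e, he, hspan, hli⟩ := exists_linearIndependent' ℝ (diffVec j)
  have : Finite κ := Finite.of_injective e he
  let : Fintype κ := Fintype.ofFinite κ
  refine ⟨Finset.univ.map ⟨e, he⟩, Finset.mem_powersetCard.mpr ⟨?_, ?_⟩, fun σ ↦ ?_⟩
  · intro σ hσ
    obtain ⟨k, -, rfl⟩ := Finset.mem_map.mp hσ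
    refine Finset.mem_compl.mpr fun h0 ↦ hli.ne_zero k ?_
    rw [Function.comp_apply, show e k = 0 from Finset.mem_singleton.mp h0]
    exact sub_self _
  · rw [Finset.card_map, Finset.card_univ, ← finrank_span_eq_card hli, hspan,
      spanDim_range_eq_finrank]
  · rw [Finset.coe_map, Finset.coe_univ, image_univ, Function.Embedding.coeFn_mk,
      ← range_comp, hspan]
    exact Submodule.subset_span (mem_range_self σ)

lemma OnHplane.dotProduct_diffVec {p : Config d δ} (hp : OnHplane p) (σ : Fin (δ + 1)) :
    (Int.cast ∘ p.1.1 : Fin d → ℝ) ⬝ᵥ diffVec p.2 σ = 0 := by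
  have h : p.1.1 ⬝ᵥ p.2 σ = p.1.1 ⬝ᵥ p.2 0 := by
    have hσ : 2 * (p.1.1 ⬝ᵥ p.2 σ) = _ := hp σ
    have h0 : 2 * (p.1.1 ⬝ᵥ p.2 0) = _ := hp 0
    omega
  rw [diffVec, dotProduct_sub, sub_eq_zero]
  simp only [dotProduct, Function.comp_apply]
  exact_mod_cast h

def shiftAt (τ : Fin (δ + 1)) (p : Config d δ) : Fin (δ + 1) → Fin d → ℤ :=
  Function.update p.2 τ (p.2 τ + p.1.1)

lemma shiftAt_injOn {S : Finset (Fin (δ + 1))} {τ : Fin (δ + 1)} (hτ0 : τ ≠ 0) (hτS : τ ∉ S) :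
    InjOn (shiftAt τ) {p : Config d δ | OnHplane p ∧ SpannedBy S p.2} := by
  rintro ⟨⟨l, s⟩, j⟩ ⟨hp, hj⟩ ⟨⟨l', s'⟩, j'⟩ ⟨hp', hj'⟩ h
  have hjj' : ∀ σ ≠ τ, j σ = j' σ := fun σ hσ ↦ by
    simpa [shiftAt, hσ] using congrFun h σ
  have hτ : j τ + l = j' τ + l' := by simpa [shiftAt] using congrFun h τ
  have h0 : j 0 = j' 0 := hjj' 0 hτ0.symm
  have hS : diffVec j '' S = diffVec j' '' S :=
    image_congr fun σ hσ ↦ by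
      simp only [diffVec, hjj' σ (ne_of_mem_of_not_mem hσ hτS), h0]
  have hl : l = l' := by
    refine (Int.cast_injective (α := ℝ)).comp_left (α := Fin d) ?_
    refine eq_of_add_eq_add_of_dotProduct_eq_zero (hj τ) (hS ▸ hj' τ)
      (fun _ ↦ dotProduct_eq_zero_of_mem_span ?_)
      (fun _ ↦ hS ▸ dotProduct_eq_zero_of_mem_span ?_) ?_
    · rintro _ ⟨σ, -, rfl⟩; exact hp.dotProduct_diffVec σ
    · rintro _ ⟨σ, -, rfl⟩; exact hp'.dotProduct_diffVec σ
    · ext i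
      have hτi : (j τ i : ℝ) + l i = j' τ i + l' i := by exact_mod_cast congrFun hτ i
      simp only [diffVec, h0, Pi.add_apply, Pi.sub_apply, Function.comp_apply]
      linarith
  subst hl
  have hj : j = j' := funext fun σ ↦ by
    rcases eq_or_ne σ τ with rfl | hσ
    · exact add_right_cancel hτ
    · exact hjj' σ hσ
  subst hj
  have : s = s' := by
    have h1 : 2 * (l ⬝ᵥ j 0) = -s - l ⬝ᵥ l := hp 0
    have h2 : 2 * (l ⬝ᵥ j 0) = -s' - l ⬝ᵥ l := hp' 0
    omega
  rw [this]

/-- Exchanges the roles of `j_σ` and `j_σ + l`. -/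
def reflect (p : Config d δ) : Config d δ := ((-p.1.1, -p.1.2), fun σ ↦ p.2 σ + p.1.1)

lemma reflect_involutive : Function.Involutive (reflect (d := d) (δ := δ)) := by
  rintro ⟨⟨l, s⟩, j⟩
  simp [reflect]

lemma OnHplane.reflect {p : Config d δ} (hp : OnHplane p) : OnHplane (reflect p) := by
  intro σ
  have h : 2 * (p.1.1 ⬝ᵥ p.2 σ) = -p.1.2 - p.1.1 ⬝ᵥ p.1.1 := hp σ
  show 2 * (-p.1.1 ⬝ᵥ (p.2 σ + p.1.1)) = -(-p.1.2) - (-p.1.1) ⬝ᵥ (-p.1.1)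
  simp only [neg_dotProduct, dotProduct_add, dotProduct_neg, neg_neg]
  linarith

lemma diffVec_reflect (p : Config d δ) : diffVec (reflect p).2 = diffVec p.2 := by
  ext σ i
  simp [diffVec, reflect]

noncomputable def weight (f : (Fin d → ℤ) → ℝ≥0∞) (p : Config d δ) : ℝ≥0∞ :=
  ∏ σ, f (p.2 σ + p.1.1) * f (p.2 σ)

lemma weight_eq_mul (f : (Fin d → ℤ) → ℝ≥0∞) (τ : Fin (δ + 1)) :
    weight f = (fun p ↦ ∏ σ, f (shiftAt τ p σ)) * fun p ↦ ∏ σ, f (shiftAt τ (reflect p) σ) := by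
  ext p
  rw [weight, Pi.mul_apply, ← Finset.prod_mul_distrib]
  refine Finset.prod_congr rfl fun σ _ ↦ ?_
  rcases eq_or_ne σ τ with rfl | hσ
  · simp [shiftAt, reflect]
  · simp [shiftAt, reflect, hσ, mul_comm]

lemma tsum_indicator_spannedBy_le (f : (Fin d → ℤ) → ℝ≥0∞) {S : Finset (Fin (δ + 1))}
    {τ : Fin (δ + 1)} (hτ0 : τ ≠ 0) (hτS : τ ∉ S) :
    ∑' p, {p : Config d δ | OnHplane p ∧ SpannedBy S p.2}.indicator (weight f) p
      ≤ (∑' k, f k ^ 2) ^ (δ + 1) := by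
  have hinj := shiftAt_injOn (d := d) hτ0 hτS
  have hmaps : MapsTo reflect {p : Config d δ | OnHplane p ∧ SpannedBy S p.2}
      {p | OnHplane p ∧ SpannedBy S p.2} := fun p hp ↦
    ⟨hp.1.reflect, by simpa only [SpannedBy, diffVec_reflect] using hp.2⟩
  rw [← ENNReal.tsum_pi_fin_prod_eq_pow, weight_eq_mul f τ]
  exact ENNReal.tsum_indicator_mul_le hinj (hinj.comp reflect_involutive.injective.injOn hmaps)
    (fun p _ ↦ (Finset.prod_pow _ _ _).symm) (fun p _ ↦ (Finset.prod_pow _ _ _).symm)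

lemma tsum_indicator_spanDim_le (f : (Fin d → ℤ) → ℝ≥0∞) {r : ℕ} (hr : r < δ) :
    ∑' p, {p : Config d δ | OnHplane p ∧ spanDim (range p.2) = r}.indicator (weight f) p
      ≤ δ.choose r * (∑' k, f k ^ 2) ^ (δ + 1) := by
  set 𝒮 := Finset.powersetCard r ({0}ᶜ : Finset (Fin (δ + 1)))
  have hcover : ∀ p : Config d δ,
      {p | OnHplane p ∧ spanDim (range p.2) = r}.indicator (weight f) p
        ≤ ∑ S ∈ 𝒮, {p | OnHplane p ∧ SpannedBy S p.2}.indicator (weight f) p := by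
    intro p
    by_cases hp : p ∈ {p : Config d δ | OnHplane p ∧ spanDim (range p.2) = r}
    · obtain ⟨S, hS, hspan⟩ := exists_spannedBy p.2
      rw [hp.2] at hS
      refine le_of_eq_of_le ?_ (Finset.single_le_sum (fun _ _ ↦ zero_le) hS)
      simp [hp.1, hp.2, hspan]
    · simp [indicator_of_notMem hp]
  calc _ ≤ ∑' p, ∑ S ∈ 𝒮, {p | OnHplane p ∧ SpannedBy S p.2}.indicator (weight f) p :=
        ENNReal.tsum_le_tsum hcover
    _ = ∑ S ∈ 𝒮, ∑' p, {p | OnHplane p ∧ SpannedBy S p.2}.indicator (weight f) p :=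
        Summable.tsum_finsetSum fun _ _ ↦ ENNReal.summable
    _ ≤ ∑ S ∈ 𝒮, (∑' k, f k ^ 2) ^ (δ + 1) := by
        refine Finset.sum_le_sum fun S hS ↦ ?_
        obtain ⟨-, hcard⟩ := Finset.mem_powersetCard.mp hS
        obtain ⟨τ, hτ, hτS⟩ : ∃ τ ∈ ({0}ᶜ : Finset (Fin (δ + 1))), τ ∉ S :=
          Finset.exists_mem_notMem_of_card_lt_card (by simpa [hcard, Finset.card_compl])
        exact tsum_indicator_spannedBy_le f (by simpa using hτ) hτS
    _ = δ.choose r * (∑' k, f k ^ 2) ^ (δ + 1) := by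
        simp [𝒮, Finset.card_powersetCard, Finset.card_compl]

end Tsum

open Tsum

theorem Tsum_le_general (d δ r : ℕ) (hr : r < δ)
    (a : (Fin d → ℤ) → ℂ) (ha : Summable fun k : Fin d → ℤ => ‖a k‖ ^ 2) :
    (Summable fun p : ((Fin d → ℤ) × ℤ) × (Fin (δ + 1) → (Fin d → ℤ)) =>
        if p.1.1 ≠ 0 ∧ (∀ σ, p.2 σ ∈ Hplane p.1.1 p.1.2) ∧ spanDim (Set.range p.2) = r
        then ∏ σ : Fin (δ + 1), ‖a (p.2 σ + p.1.1)‖ * ‖a (p.2 σ)‖ else 0) ∧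
      Tsum d δ r a ≤ (δ.choose r : ℝ) * (∑' k : Fin d → ℤ, ‖a k‖ ^ 2) ^ (δ + 1) := by
  have hpt : ∀ p : Config d δ,
      ENNReal.ofReal (if p.1.1 ≠ 0 ∧ (∀ σ, p.2 σ ∈ Hplane p.1.1 p.1.2) ∧ spanDim (range p.2) = r
        then ∏ σ : Fin (δ + 1), ‖a (p.2 σ + p.1.1)‖ * ‖a (p.2 σ)‖ else 0)
      ≤ {p | OnHplane p ∧ spanDim (range p.2) = r}.indicator (weight (‖a ·‖ₑ)) p := by
    intro p
    split_ifs with h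
    · rw [ENNReal.ofReal_prod_of_nonneg (fun _ _ ↦ by positivity)]
      simp [OnHplane, h.2.1, h.2.2, weight, ENNReal.ofReal_mul, ofReal_norm]
    · simp
  have hnorm : ∑' k, ‖a k‖ₑ ^ 2 = ENNReal.ofReal (∑' k, ‖a k‖ ^ 2) := by
    simp [ENNReal.ofReal_tsum_of_nonneg (fun _ ↦ by positivity) ha, ENNReal.ofReal_pow,
      ofReal_norm]
  refine summable_and_tsum_le_of_tsum_ofReal_le (fun p ↦ by split_ifs <;> positivity)
    (by positivity) ?_
  calc _ ≤ _ := ENNReal.tsum_le_tsum hpt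
    _ ≤ _ := tsum_indicator_spanDim_le _ hr
    _ = _ := by
      rw [hnorm, ENNReal.ofReal_mul (by positivity), ENNReal.ofReal_pow (by positivity),
        ENNReal.ofReal_natCast]

/-- Lemma 1: `T_{r,δ}(u) ≤ binom(δ,r) ‖u‖^{2(δ+1)}`. -/
theorem Tsum_le (d δ r : ℕ) (hd : 1 ≤ d) (hδ : 1 ≤ δ) (hδd : δ ≤ d) (hr : r < δ)
    (a : (Fin d → ℤ) → ℂ) (ha : Summable fun k : Fin d → ℤ => ‖a k‖ ^ 2) :
    (Summable fun p : ((Fin d → ℤ) × ℤ) × (Fin (δ + 1) → (Fin d → ℤ)) =>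
        if p.1.1 ≠ 0 ∧ (∀ σ, p.2 σ ∈ Hplane p.1.1 p.1.2) ∧ spanDim (Set.range p.2) = r
        then ∏ σ : Fin (δ + 1), ‖a (p.2 σ + p.1.1)‖ * ‖a (p.2 σ)‖ else 0) ∧
      Tsum d δ r a ≤ (δ.choose r : ℝ) * (∑' k : Fin d → ℤ, ‖a k‖ ^ 2) ^ (δ + 1) :=
  Tsum_le_general d δ r hr a ha
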